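/- Let G be a ribbon graph (possibly nonorientable). Then the Bollobás–Riordan polynomial is obtained from the generalized Krushkal polynomial by BR_G(X,Y,Z) = Y^{s(G)/2} · P_G(X, Y, YZ², Y^{−1}). -/
import Mathlib


open scoped Classical

noncomputable section

/-- A ribbon graph: a surface with boundary equipped with a handle decomposition into
0-handles (vertices) and 1-handles (edges), recorded through its combinatorial
invariants.  A spanning subgraph `F_H` of `G` (containing all vertices) is identified
with its edge set `H : Finset E`. -/
structure RibbonGraph where
  /-- the edge set of `G` -/
  E : Type
  [fE : Fintype E]
  [dE : DecidableEq E]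
  /-- `v(G)`, the number of vertices of `G` -/
  nv : ℕ
  /-- the surface `G` is orientable -/
  orientable : Prop
  /-- `c(F_H)`, the number of connected components of the spanning subgraph `F_H` -/
  c : Finset E → ℕ
  /-- `bc(F_H)`, the number of boundary components of the spanning subgraph `F_H` -/
  bc : Finset E → ℕ
  /-- `links Q e f` : in the one-vertex ribbon graph `G^{E(Q)}` (the partial dual with
  respect to a quasi-tree `Q`), traversing the boundary of the vertex, the boundaries of
  the edge ribbons `e` and `f` are met alternately -/
  links : Finset E → E → E → Prop
  /-- `orientableLoop Q e` : `e` is an orientable loop in the one-vertex ribbon graph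
  `G^{E(Q)}` -/
  orientableLoop : Finset E → E → Prop
  /-- the empty spanning subgraph has one component for each vertex -/
  c_empty : c ∅ = nv
  /-- the empty spanning subgraph has one boundary circle for each vertex -/
  bc_empty : bc ∅ = nv
  /-- linking is symmetric -/
  links_symm : ∀ Q e f, links Q e f → links Q f e

attribute [instance] RibbonGraph.fE RibbonGraph.dE

namespace RibbonGraph

variable (G : RibbonGraph)

/-- `G` is connected -/
def Connected : Prop := G.c Finset.univ = 1

/-- a quasi-tree is a spanning subgraph with exactly one boundary component -/
def IsQuasiTree (Q : Finset G.E) : Prop := G.bc Q = 1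

/-- `𝒬_G`, the set of quasi-trees of `G` -/
def quasiTrees : Finset (Finset G.E) := Finset.univ.filter fun Q => G.bc Q = 1

/-- the nullity `n(F_H) = e − v + c` of a spanning subgraph -/
def n (H : Finset G.E) : ℤ := (H.card : ℤ) - (G.nv : ℤ) + G.c H

/-- the ribbon-graph invariant `s(F_H) = 2c − v + e − bc` -/
def s (H : Finset G.E) : ℤ :=
  2 * (G.c H : ℤ) - (G.nv : ℤ) + (H.card : ℤ) - (G.bc H : ℤ)

variable [LinearOrder G.E]

/-- an edge is live with respect to a quasi-tree `Q` if it links no lower-ordered edge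
in `G^{E(Q)}`; otherwise it is dead -/
def Live (Q : Finset G.E) (e : G.E) : Prop := ∀ f : G.E, f < e → ¬ G.links Q e f

/-- `𝒟ℐ(Q)`, the internally dead edges -/
def DI (Q : Finset G.E) : Finset G.E := Q.filter fun e => ¬ G.Live Q e

/-- `ℐ_o(Q)`, the internally live orientable edges -/
def Io (Q : Finset G.E) : Finset G.E :=
  Q.filter fun e => G.Live Q e ∧ G.orientableLoop Q e

/-- `ℐ_n(Q)`, the internally live nonorientable edges -/
def In (Q : Finset G.E) : Finset G.E :=
  Q.filter fun e => G.Live Q e ∧ ¬ G.orientableLoop Q e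

/-- `𝒟ℰ(Q)`, the externally dead edges -/
def DE (Q : Finset G.E) : Finset G.E := Qᶜ.filter fun e => ¬ G.Live Q e

/-- `ℰ_o(Q)`, the externally live orientable edges -/
def Eo (Q : Finset G.E) : Finset G.E :=
  Qᶜ.filter fun e => G.Live Q e ∧ G.orientableLoop Q e

/-- `ℰ_n(Q)`, the externally live nonorientable edges -/
def En (Q : Finset G.E) : Finset G.E :=
  Qᶜ.filter fun e => G.Live Q e ∧ ¬ G.orientableLoop Q e

/-- `𝒱ℐ(Q) = 𝒟ℐ(Q) ∪ ℐ_n(Q)` -/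
def VI (Q : Finset G.E) : Finset G.E := G.DI Q ∪ G.In Q

/-- `𝒱ℰ(Q) = 𝒟ℰ(Q) ∪ ℰ_n(Q)` -/
def VE (Q : Finset G.E) : Finset G.E := G.DE Q ∪ G.En Q

end RibbonGraph

/-- An isomorphism of ribbon graphs, recorded through the invariants of the present
interface: a bijection of edges preserving vertex count, orientability, and the
component and boundary-component counts of all spanning subgraphs. -/
structure RibbonIso (G G' : RibbonGraph) where
  edgeEquiv : G.E ≃ G'.E
  nv_eq : G'.nv = G.nv
  orientable_iff : G'.orientable ↔ G.orientable
  c_eq : ∀ A : Finset G.E, G'.c (A.image edgeEquiv) = G.c A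
  bc_eq : ∀ A : Finset G.E, G'.bc (A.image edgeEquiv) = G.bc A

/-- `G'` is the partial dual `G^H` of the ribbon graph `G` with respect to `H ⊆ E(G)`:
it is obtained by gluing a disk to each boundary curve of the spanning subgraph `F_H`
regarded inside `G` and then removing the interiors of the vertex disks of `G`.  The
edges of `G'` correspond to those of `G` via `edgeEquiv`.  The spanning subgraph of
`G^H` with edge set `A` has the boundary components of the spanning subgraph of `G`
with edge set the symmetric difference of `A` and `H`; partial duality preserves
orientability, and deleting edges disjoint from `H` yields the same number of
connected components as in `G`. -/
structure IsPartialDual (G : RibbonGraph) (H : Finset G.E) (G' : RibbonGraph) where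
  edgeEquiv : G.E ≃ G'.E
  orientable_iff : G'.orientable ↔ G.orientable
  bc_eq : ∀ A : Finset G.E, G'.bc (A.image edgeEquiv) = G.bc ((A ∪ H) \ (A ∩ H))
  c_del : ∀ B : Finset G.E, Disjoint B H →
    G'.c ((Finset.univ \ B).image edgeEquiv) = G.c (Finset.univ \ B)

/-- `G'` is the dual ribbon graph `G*` of `G`: glue a disk to each boundary component
of `G` (these disks are the vertices of `G*`) and delete the interiors of the vertices
of `G`.  The edge `edgeEquiv e` is the dual edge `e*`.  The spanning subgraph of `G*`
with edge set `{e* : e ∈ A}` has a regular neighborhood complementary to that of the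
spanning subgraph of `G` with edge set `E(G) ∖ A`, and `(G*)^{A*} = G^{E(G)∖A}`, which
identifies the linking relation and loop orientability data of `G*` with those of `G`. -/
structure IsDual (G G' : RibbonGraph) where
  edgeEquiv : G.E ≃ G'.E
  orientable_iff : G'.orientable ↔ G.orientable
  nv_eq : G'.nv = G.bc Finset.univ
  c_eq : G'.c Finset.univ = G.c Finset.univ
  bc_eq : ∀ A : Finset G.E, G'.bc (A.image edgeEquiv) = G.bc (Finset.univ \ A)
  links_eq : ∀ (A : Finset G.E) (e f : G.E),
    G'.links (A.image edgeEquiv) (edgeEquiv e) (edgeEquiv f) ↔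
      G.links (Finset.univ \ A) e f
  orientableLoop_eq : ∀ (A : Finset G.E) (e : G.E),
    G'.orientableLoop (A.image edgeEquiv) (edgeEquiv e) ↔
      G.orientableLoop (Finset.univ \ A) e

namespace RibbonGraph

/-- The generalized Krushkal polynomial of a ribbon graph `G` with dual `G'` (edges
corresponding via `d`):
`P_G(X,Y,A,B) = Σ_F X^{c(F)−c(G)} Y^{c(F*)−c(G*)} A^{s(F)/2} B^{s(F*)/2}`,
summed over all spanning subgraphs `F`, where `F*` is the spanning subgraph of `G*`
whose edges are the duals of the edges not in `F`.  It is evaluated at (positive) real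
numbers, the possibly half-integer exponents being interpreted via `Real.rpow`. -/
def krushkalRib (G G' : RibbonGraph) (d : G.E ≃ G'.E) (X Y A B : ℝ) : ℝ :=
  ∑ F : Finset G.E,
    X ^ ((G.c F : ℝ) - (G.c Finset.univ : ℝ)) *
    Y ^ ((G'.c ((Finset.univ \ F).image d) : ℝ) - (G'.c Finset.univ : ℝ)) *
    A ^ ((G.s F : ℝ) / 2) *
    B ^ ((G'.s ((Finset.univ \ F).image d) : ℝ) / 2)

/-- the Bollobás–Riordan polynomial
`BR_G(X,Y,Z) = Σ_F X^{c(F)−c(G)} Y^{n(F)} Z^{c(F)+n(F)−bc(F)}`, summed over all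
spanning ribbon subgraphs `F` of `G` -/
def br (G : RibbonGraph) (X Y Z : ℝ) : ℝ :=
  ∑ F : Finset G.E,
    X ^ ((G.c F : ℝ) - (G.c Finset.univ : ℝ)) *
    Y ^ ((G.n F : ℝ)) *
    Z ^ ((G.c F : ℝ) + (G.n F : ℝ) - (G.bc F : ℝ))

/-- The Tutte polynomial `T_{G_Q}` of the abstract graph `G_Q` whose vertices are the
connected components of `F_{𝒱ℐ(Q)}` and whose edges are the edges in `ℐ_o(Q)`: a
spanning subgraph of `G_Q` with edge set `W ⊆ ℐ_o(Q)` has `c(F_{𝒱ℐ(Q) ∪ W})` connected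
components, and `G_Q` has `c(F_{𝒱ℐ(Q)})` vertices and `c(F_{𝒱ℐ(Q) ∪ ℐ_o(Q)})`
components. -/
def tutteGQ (G : RibbonGraph) [LinearOrder G.E] (Q : Finset G.E) (X A : ℝ) : ℝ :=
  ∑ W ∈ (G.Io Q).powerset,
    X ^ ((G.c (G.VI Q ∪ W) : ℝ) - (G.c (G.VI Q ∪ G.Io Q) : ℝ)) *
    A ^ ((W.card : ℝ) - (G.c (G.VI Q) : ℝ) + (G.c (G.VI Q ∪ W) : ℝ))

/-- The Tutte polynomial `T_{G*_{Q*}}` of the abstract graph `G*_{Q*}` whose vertices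
are the connected components of the spanning subgraph `R_{𝒱ℰ(Q)}` of the dual `G*`
and whose edges are the edges of `ℰ_o(Q)` regarded as edges of `G*`: a spanning
subgraph with edge set `W ⊆ ℰ_o(Q)` has `c(R_{𝒱ℰ(Q) ∪ W})` connected components. -/
def tutteGQdual (G : RibbonGraph) [LinearOrder G.E] (G' : RibbonGraph) (d : G.E ≃ G'.E)
    (Q : Finset G.E) (Y B : ℝ) : ℝ :=
  ∑ W ∈ (G.Eo Q).powerset,
    Y ^ ((G'.c ((G.VE Q ∪ W).image d) : ℝ) -
          (G'.c ((G.VE Q ∪ G.Eo Q).image d) : ℝ)) *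
    B ^ ((W.card : ℝ) - (G'.c ((G.VE Q).image d) : ℝ) +
          (G'.c ((G.VE Q ∪ W).image d) : ℝ))

end RibbonGraph

/-- For a ribbon graph `G` (possibly nonorientable) with dual `G*`,
the Bollobás–Riordan polynomial is obtained from the generalized Krushkal polynomial
by `BR_G(X,Y,Z) = Y^{s(G)/2} · P_G(X, Y, YZ², Y⁻¹)`. -/
theorem br_eq_krushkal_specialization (G G' : RibbonGraph) (hd : IsDual G G')
    (X Y Z : ℝ) (hX : 0 < X) (hY : 0 < Y) (hZ : 0 < Z) :
    G.br X Y Z =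
      Y ^ ((G.s Finset.univ : ℝ) / 2) *
        RibbonGraph.krushkalRib G G' hd.edgeEquiv X Y (Y * Z ^ 2) Y⁻¹ := by
  classical
  unfold RibbonGraph.br RibbonGraph.krushkalRib
  rw [Finset.mul_sum]
  refine Finset.sum_congr rfl fun F _ => ?_
  set Fs := (Finset.univ \ F).image hd.edgeEquiv with hFs
  have hbc : (G'.bc Fs : ℝ) = (G.bc F : ℝ) := by
    rw [hFs, hd.bc_eq]
    congr 2
    simp [Finset.sdiff_sdiff_self_left]
  have hcard : (Fs.card : ℝ) = ((Finset.univ : Finset G.E).card : ℝ) - (F.card : ℝ) := by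
    rw [hFs, Finset.card_image_of_injective _ hd.edgeEquiv.injective,
      Finset.card_sdiff_of_subset (Finset.subset_univ F)]
    exact Nat.cast_sub (Finset.card_le_univ F)
  have hnv : (G'.nv : ℝ) = (G.bc Finset.univ : ℝ) := by rw [hd.nv_eq]
  have hc : (G'.c Finset.univ : ℝ) = (G.c Finset.univ : ℝ) := by rw [hd.c_eq]
  have e1 : (G.n F : ℝ) =
      (G.s Finset.univ : ℝ) / 2 +
        (((G'.c Fs : ℝ) - (G'.c Finset.univ : ℝ)) +
          ((G.s F : ℝ) / 2 + -((G'.s Fs : ℝ) / 2))) := by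
    simp only [RibbonGraph.n, RibbonGraph.s]
    push_cast
    rw [hbc, hcard, hnv, hc]
    ring
  have e2 : (G.c F : ℝ) + (G.n F : ℝ) - (G.bc F : ℝ) = ((2 : ℕ) : ℝ) * ((G.s F : ℝ) / 2) := by
    simp only [RibbonGraph.n, RibbonGraph.s]
    push_cast
    ring
  rw [e2, e1, Real.rpow_add hY, Real.rpow_add hY, Real.rpow_add hY,
    Real.mul_rpow hY.le (by positivity), Real.inv_rpow hY.le,
    ← Real.rpow_natCast Z 2, ← Real.rpow_mul hZ.le, ← Real.rpow_neg hY.le]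
  ring
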